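/- Let 1 ≤ k ≤ n−1, let ψ : {1,…,n} → ℂ and let P be the homogeneous operator of degree k associated to ψ. Suppose P is a Reynolds operator, i.e. P(x)·P(y) = P(x·P(y) + P(x)·y − P(x)·P(y)) for all x, y ∈ A. Then ψ(i) = 0 for all n−k+1 ≤ i ≤ n; moreover ψ(i)·ψ(j) = (ψ(i) + ψ(j))·ψ(i+j+k) for all i, j ≥ 1 with 2 ≤ i + j ≤ n − 2k, and ψ(i)·ψ(j)·ψ(i+j+2k) = 0 for all i, j ≥ 1 with 2 ≤ i + j ≤ n − 3k. -/
import Mathlib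


open Finset

/-- Coordinate space of the `n`-dimensional complex null-filiform associative algebra,
with respect to the basis `e_1, …, e_n` (coordinate `m : Fin n` corresponds to `e_{m+1}`). -/
abbrev NF (n : ℕ) : Type := Fin n → ℂ

/-- Multiplication of the null-filiform algebra: `e_i · e_j = e_{i+j}` if `i + j ≤ n`
and `e_i · e_j = 0` if `i + j > n`, extended bilinearly. -/
noncomputable def nfMul {n : ℕ} (x y : NF n) : NF n :=
  fun m => ∑ i : Fin n, ∑ j : Fin n,
    if (i : ℕ) + (j : ℕ) + 1 = (m : ℕ) then x i * y j else 0

/-- The basis element `e_k`, for `1 ≤ k ≤ n` (it is `0` if `k = 0` or `k > n`). -/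
noncomputable def nfE (n k : ℕ) : NF n := fun m => if (m : ℕ) + 1 = k then 1 else 0

/-- The `k`-th power (for `k ≥ 1`) of an element of the null-filiform algebra. -/
noncomputable def nfPow {n : ℕ} (x : NF n) : ℕ → NF n
  | 0 => 0
  | 1 => x
  | k + 2 => nfMul (nfPow x (k + 1)) x

lemma nfE_ge {n a : ℕ} (h : n < a) : nfE n a = 0 := by
  funext m
  have := m.isLt
  simp only [nfE, Pi.zero_apply]
  rw [if_neg (by omega)]

lemma nfMul_smul_left {n : ℕ} (c : ℂ) (x y : NF n) :
    nfMul (c • x) y = c • nfMul x y := by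
  funext m
  simp only [nfMul, Pi.smul_apply, smul_eq_mul, Finset.mul_sum]
  refine Finset.sum_congr rfl fun i _ => Finset.sum_congr rfl fun j _ => ?_
  split <;> ring

lemma nfMul_smul_right {n : ℕ} (c : ℂ) (x y : NF n) :
    nfMul x (c • y) = c • nfMul x y := by
  funext m
  simp only [nfMul, Pi.smul_apply, smul_eq_mul, Finset.mul_sum]
  refine Finset.sum_congr rfl fun i _ => Finset.sum_congr rfl fun j _ => ?_
  split <;> ring

lemma nfMul_e {n : ℕ} (a b : ℕ) (ha : 1 ≤ a) (hb : 1 ≤ b) :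
    nfMul (nfE n a) (nfE n b) = nfE n (a + b) := by
  funext m
  have hm := m.isLt
  simp only [nfMul, nfE]
  by_cases hc : (m : ℕ) + 1 = a + b
  · rw [if_pos hc]
    have hai : a - 1 < n := by omega
    have hbi : b - 1 < n := by omega
    rw [Finset.sum_eq_single (⟨a - 1, hai⟩ : Fin n)]
    · rw [Finset.sum_eq_single (⟨b - 1, hbi⟩ : Fin n)]
      · rw [if_pos (by simp; omega)]
        simp [if_pos (by omega : (a-1) + 1 = a), if_pos (by omega : (b-1) + 1 = b)]
      · intro j _ hj
        have : (j : ℕ) ≠ b - 1 := fun h => hj (Fin.ext h)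
        split_ifs with h1 h2 <;> simp_all <;> omega
      · simp
    · intro i _ hi
      have hi' : (i : ℕ) ≠ a - 1 := fun h => hi (Fin.ext h)
      apply Finset.sum_eq_zero
      intro j _
      split_ifs with h1 h2 <;> simp_all <;> omega
    · simp
  · rw [if_neg hc]
    apply Finset.sum_eq_zero; intro i _
    apply Finset.sum_eq_zero; intro j _
    split_ifs with h1 h2 h3 <;> simp_all <;> omega

/-- A homogeneous Reynolds operator of degree `k ≥ 1` satisfies `ψ(i) = 0` for
`n−k+1 ≤ i ≤ n`, `ψ(i)ψ(j) = (ψ(i)+ψ(j))ψ(i+j+k)` for `2 ≤ i+j ≤ n−2k`, and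
`ψ(i)ψ(j)ψ(i+j+2k) = 0` for `2 ≤ i+j ≤ n−3k`. -/
theorem reynolds_degreek (n k : ℕ) (hk1 : 1 ≤ k) (hk2 : k ≤ n - 1)
    (ψ : ℕ → ℂ) (P : NF n →ₗ[ℂ] NF n)
    (hP : ∀ i, 1 ≤ i → i ≤ n →
      P (nfE n i) = ψ i • nfE n (if i + k ≤ n then i + k else i + k - n))
    (hRey : ∀ x y : NF n,
      nfMul (P x) (P y) =
        P (nfMul x (P y) + nfMul (P x) y - nfMul (P x) (P y))) :
    (∀ i, n - k + 1 ≤ i → i ≤ n → ψ i = 0) ∧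
    (∀ i j, 1 ≤ i → 1 ≤ j → i + j ≤ n - 2 * k →
      ψ i * ψ j = (ψ i + ψ j) * ψ (i + j + k)) ∧
    (∀ i j, 1 ≤ i → 1 ≤ j → i + j ≤ n - 3 * k →
      ψ i * ψ j * ψ (i + j + 2 * k) = 0) := by
  have hn : k + 1 ≤ n := by omega
  -- common computation for parts 2 and 3
  have key : ∀ i j, 1 ≤ i → 1 ≤ j → i + j + 2 * k ≤ n →
      (ψ i * ψ j) • nfE n (i + j + 2 * k) =
        ((ψ j * ψ (i + j + k) + ψ i * ψ (i + j + k)) • nfE n (i + j + 2 * k))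
        - (ψ i * ψ j * ψ (i + j + 2 * k)) •
            nfE n (if i + j + 2 * k + k ≤ n then i + j + 2 * k + k
                   else i + j + 2 * k + k - n) := by
    intro i j hi hj hij
    have hPi : P (nfE n i) = ψ i • nfE n (i + k) := by
      rw [hP i hi (by omega), if_pos (by omega)]
    have hPj : P (nfE n j) = ψ j • nfE n (j + k) := by
      rw [hP j hj (by omega), if_pos (by omega)]
    have h := hRey (nfE n i) (nfE n j)
    rw [hPi, hPj, nfMul_smul_left, nfMul_smul_right, nfMul_smul_right, nfMul_smul_left,
        nfMul_e i (j + k) hi (by omega), nfMul_e (i + k) j (by omega) hj,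
        nfMul_e (i + k) (j + k) (by omega) (by omega),
        show i + (j + k) = i + j + k by omega,
        show i + k + j = i + j + k by omega,
        show i + k + (j + k) = i + j + 2 * k by omega] at h
    rw [map_sub, map_add, map_smul, map_smul, map_smul, map_smul,
        hP (i + j + k) (by omega) (by omega), if_pos (by omega : i + j + k + k ≤ n),
        show i + j + k + k = i + j + 2 * k by omega,
        hP (i + j + 2 * k) (by omega) (by omega)] at h
    rw [smul_smul] at h
    rw [h]
    simp only [smul_smul]
    ring_nf
    module
  refine ⟨?_, ?_, ?_⟩
  · intro i hi1 hi2
    have hr1 : 1 ≤ i + k - n := by omega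
    have hrn : i + k - n ≤ n := by omega
    have hPi : P (nfE n i) = ψ i • nfE n (i + k - n) := by
      rw [hP i (by omega) hi2, if_neg (by omega)]
    have hPj : P (nfE n (n - k)) = ψ (n - k) • nfE n n := by
      rw [hP (n - k) (by omega) (by omega), if_pos (by omega),
        show n - k + k = n by omega]
    have h := hRey (nfE n i) (nfE n (n - k))
    rw [hPi, hPj, nfMul_smul_left, nfMul_smul_right, nfMul_smul_right, nfMul_smul_left,
        nfMul_e i n (by omega) (by omega),
        nfMul_e (i + k - n) (n - k) hr1 (by omega),
        nfMul_e (i + k - n) n hr1 (by omega),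
        show i + k - n + (n - k) = i by omega,
        nfE_ge (show n < i + n by omega),
        nfE_ge (show n < i + k - n + n by omega)] at h
    simp only [smul_zero, zero_add, sub_zero, map_smul, hPi, smul_smul] at h
    have h' := congrFun h.symm ⟨i + k - n - 1, by omega⟩
    simp only [nfE, Pi.smul_apply, Pi.zero_apply, smul_eq_mul,
      if_pos (show i + k - n - 1 + 1 = i + k - n by omega)] at h'
    have : ψ i * ψ i = 0 := by rw [← h']; ring
    exact mul_self_eq_zero.mp this
  · intro i j hi hj hij
    have h := key i j hi hj (by omega)
    rcases le_or_gt (i + j + 2 * k + k) n with hg | hg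
    · rw [if_pos hg] at h
      have h' := congrFun h ⟨i + j + 2 * k - 1, by omega⟩
      simp only [nfE, Pi.smul_apply, Pi.sub_apply, smul_eq_mul,
        if_pos (show i + j + 2 * k - 1 + 1 = i + j + 2 * k by omega),
        if_neg (show ¬ (i + j + 2 * k - 1 + 1 = i + j + 2 * k + k) by omega)] at h'
      linear_combination h'
    · rw [if_neg (by omega)] at h
      have h' := congrFun h ⟨i + j + 2 * k - 1, by omega⟩
      simp only [nfE, Pi.smul_apply, Pi.sub_apply, smul_eq_mul,
        if_pos (show i + j + 2 * k - 1 + 1 = i + j + 2 * k by omega),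
        if_neg (show ¬ (i + j + 2 * k - 1 + 1 = i + j + 2 * k + k - n) by omega)] at h'
      linear_combination h'
  · intro i j hi hj hij
    have h := key i j hi hj (by omega)
    rw [if_pos (by omega : i + j + 2 * k + k ≤ n)] at h
    have h' := congrFun h ⟨i + j + 2 * k + k - 1, by omega⟩
    simp only [nfE, Pi.smul_apply, Pi.sub_apply, smul_eq_mul,
      if_neg (show ¬ (i + j + 2 * k + k - 1 + 1 = i + j + 2 * k) by omega),
      if_pos (show i + j + 2 * k + k - 1 + 1 = i + j + 2 * k + k by omega)] at h'
    linear_combination h'
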